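/- arXiv:2403.05744 — 5 statements merged into one kernel-verified Lean document; each statement's English description precedes it below -/
import Mathlib

section
/- Let a21, b03, a03 be real numbers. Define P⁻(x,y) = 2·a21·x·y + a21·x²·y − 6·b03·y² − 3·b03·x·y² + a03·y³, Q(x,y) = x + (3/2)·x² − a21·y² + (1/2)·x³ − a21·x·y² + b03·y³, and H⁻(x,y) = −x²/2 − x³/2 − x⁴/8 + (a21/2)·x²·y² − b03·x·y³ + a21·x·y² − 2·b03·y³ + (a03/4)·y⁴. Then for every (x,y) ∈ ℝ², P⁻(x,y) = ∂H⁻/∂y (x,y) and Q(x,y) = −∂H⁻/∂x (x,y); moreover, with H⁺(x,y) = −x²/2 − x³/2 − x⁴/8 + (a21/2)·x²·y² − b03·x·y³ + a21·x·y² + (a03/4)·y⁴, one has H⁺(x,0) = H⁻(x,0) for all x ∈ ℝ. -/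
lemma hasDerivAt_quartic (a b c d e t : ℝ) :
    HasDerivAt (fun s : ℝ => a + b * s + c * s ^ 2 + d * s ^ 3 + e * s ^ 4)
      (b + 2 * c * t + 3 * d * t ^ 2 + 4 * e * t ^ 3) t := by
  refine ((((hasDerivAt_const t a).add ((hasDerivAt_id t).const_mul b)).add
    ((hasDerivAt_pow 2 t).const_mul c)).add ((hasDerivAt_pow 3 t).const_mul d)).add
    ((hasDerivAt_pow 4 t).const_mul e) |>.congr_deriv ?_
  push_cast
  ring

lemma deriv_quartic (a b c d e t : ℝ) :
    deriv (fun s : ℝ => a + b * s + c * s ^ 2 + d * s ^ 3 + e * s ^ 4) t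
      = b + 2 * c * t + 3 * d * t ^ 2 + 4 * e * t ^ 3 :=
  (hasDerivAt_quartic a b c d e t).deriv

/-- Under bi-center condition I, the lower system of the translated
Z₂-equivariant cubic switching system is Hamiltonian with Hamiltonian H⁻,
and H⁺ and H⁻ agree on the switching line y = 0. -/
theorem stmt_1 (a21 b03 a03 : ℝ)
    (Pm Q Hm Hp : ℝ → ℝ → ℝ)
    (hP : ∀ x y, Pm x y = 2*a21*x*y + a21*x^2*y - 6*b03*y^2 - 3*b03*x*y^2 + a03*y^3)
    (hQ : ∀ x y, Q x y = x + (3/2)*x^2 - a21*y^2 + (1/2)*x^3 - a21*x*y^2 + b03*y^3)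
    (hHm : ∀ x y, Hm x y = -x^2/2 - x^3/2 - x^4/8 + (a21/2)*x^2*y^2
        - b03*x*y^3 + a21*x*y^2 - 2*b03*y^3 + (a03/4)*y^4)
    (hHp : ∀ x y, Hp x y = -x^2/2 - x^3/2 - x^4/8 + (a21/2)*x^2*y^2
        - b03*x*y^3 + a21*x*y^2 + (a03/4)*y^4) :
    (∀ x y : ℝ,
      Pm x y = deriv (fun y' : ℝ => Hm x y') y ∧
      Q x y = - deriv (fun x' : ℝ => Hm x' y) x) ∧
    (∀ x : ℝ, Hp x 0 = Hm x 0) := by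
  refine ⟨fun x y => ⟨?_, ?_⟩, fun x => by rw [hHp, hHm]; ring⟩
  · have hHm_in_y : (fun y' : ℝ => Hm x y') = fun s : ℝ => (-x^2/2 - x^3/2 - x^4/8) + 0 * s
        + ((a21/2)*x^2 + a21*x) * s^2 + (-b03*x - 2*b03) * s^3 + (a03/4) * s^4 :=
      funext fun s => by rw [hHm]; ring
    rw [hHm_in_y, deriv_quartic, hP]
    ring
  · have hHm_in_x : (fun x' : ℝ => Hm x' y) = fun s : ℝ => (-2*b03*y^3 + (a03/4)*y^4)
        + (a21*y^2 - b03*y^3) * s + (-1/2 + (a21/2)*y^2) * s^2 + (-1/2) * s^3 + (-1/8) * s^4 :=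
      funext fun s => by rw [hHm]; ring
    rw [hHm_in_x, deriv_quartic, hQ]
    ring
end

section
/- Let a21, b03, a03 be real numbers, and define P(x,y) = 2·a21·x·y + a21·x²·y − 3·b03·x·y² + a03·y³, Q(x,y) = x + (3/2)·x² − a21·y² + (1/2)·x³ − a21·x·y² + b03·y³, and H⁺(x,y) = −x²/2 − x³/2 − x⁴/8 + (a21/2)·x²·y² − b03·x·y³ + a21·x·y² + (a03/4)·y⁴. If J ⊆ ℝ is an open interval and x, y : ℝ → ℝ are differentiable on J with x′(t) = P(x(t), y(t)) and y′(t) = Q(x(t), y(t)) for all t ∈ J, then the function t ↦ H⁺(x(t), y(t)) is constant on J. -/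
/-!
The upper system is Hamiltonian with Hamiltonian `H⁺`: one checks `∂H⁺/∂y = P` and
`∂H⁺/∂x = -Q`. Along a solution the chain rule therefore gives
`d/dt H⁺(x, y) = -Q·P + P·Q = 0`, and a function with vanishing derivative on an interval
is constant there.
-/

theorem Set.OrdConnected.eq_of_hasDerivAt_eq_zero {E : Type*} [NormedAddCommGroup E]
    [NormedSpace ℝ E] {J : Set ℝ} (hJ : J.OrdConnected) {f : ℝ → E}
    (hf : ∀ t ∈ J, HasDerivAt f 0 t) {a b : ℝ} (ha : a ∈ J) (hb : b ∈ J) : f a = f b := by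
  have hle : ‖f b - f a‖ ≤ 0 * ‖b - a‖ :=
    hJ.convex.norm_image_sub_le_of_norm_hasDerivWithin_le
      (fun t ht => (hf t ht).hasDerivWithinAt) (fun _ _ => norm_zero.le) ha hb
  rw [zero_mul, norm_le_zero_iff, sub_eq_zero] at hle
  exact hle.symm

noncomputable section

namespace UpperBiCenterI

variable (a21 b03 a03 : ℝ)

def P (x y : ℝ) : ℝ := 2*a21*x*y + a21*x^2*y - 3*b03*x*y^2 + a03*y^3

def Q (x y : ℝ) : ℝ := x + (3/2)*x^2 - a21*y^2 + (1/2)*x^3 - a21*x*y^2 + b03*y^3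

def H (x y : ℝ) : ℝ :=
  -x^2/2 - x^3/2 - x^4/8 + (a21/2)*x^2*y^2 - b03*x*y^3 + a21*x*y^2 + (a03/4)*y^4

variable {a21 b03 a03}

theorem hasDerivAt_H_comp {x y : ℝ → ℝ} {x' y' t : ℝ} (hx : HasDerivAt x x' t)
    (hy : HasDerivAt y y' t) :
    HasDerivAt (fun s => H a21 b03 a03 (x s) (y s))
      (-Q a21 b03 (x t) (y t) * x' + P a21 b03 a03 (x t) (y t) * y') t := by
  have h := (((((((hx.pow 2).div_const 2).neg.sub ((hx.pow 3).div_const 2)).sub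
    ((hx.pow 4).div_const 8)).add (((hx.pow 2).const_mul (a21/2)).mul (hy.pow 2))).sub
    ((hx.const_mul b03).mul (hy.pow 3))).add ((hx.const_mul a21).mul (hy.pow 2))).add
    ((hy.pow 4).const_mul (a03/4))
  refine (h.congr_deriv ?_).congr_of_eventuallyEq (.of_forall fun s => ?_)
  · simp only [P, Q, Pi.pow_apply]
    push_cast
    ring
  · simp only [H, Pi.add_apply, Pi.sub_apply, Pi.neg_apply, Pi.mul_apply, Pi.pow_apply]
    ring

theorem H_eq_along_solution {J : Set ℝ} (hJ : J.OrdConnected) {x y : ℝ → ℝ}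
    (hx : ∀ t ∈ J, HasDerivAt x (P a21 b03 a03 (x t) (y t)) t)
    (hy : ∀ t ∈ J, HasDerivAt y (Q a21 b03 (x t) (y t)) t) {t₁ t₂ : ℝ} (ht₁ : t₁ ∈ J)
    (ht₂ : t₂ ∈ J) : H a21 b03 a03 (x t₁) (y t₁) = H a21 b03 a03 (x t₂) (y t₂) :=
  hJ.eq_of_hasDerivAt_eq_zero
    (fun t ht => (hasDerivAt_H_comp (hx t ht) (hy t ht)).congr_deriv (by ring)) ht₁ ht₂

end UpperBiCenterI

end

theorem stmt_2_general (a21 b03 a03 : ℝ)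
    (P Q Hp : ℝ → ℝ → ℝ)
    (hP : ∀ x y, P x y = 2*a21*x*y + a21*x^2*y - 3*b03*x*y^2 + a03*y^3)
    (hQ : ∀ x y, Q x y = x + (3/2)*x^2 - a21*y^2 + (1/2)*x^3 - a21*x*y^2 + b03*y^3)
    (hH : ∀ x y, Hp x y = -x^2/2 - x^3/2 - x^4/8 + (a21/2)*x^2*y^2
        - b03*x*y^3 + a21*x*y^2 + (a03/4)*y^4)
    (J : Set ℝ) (hJconn : J.OrdConnected)
    (x y : ℝ → ℝ)
    (hx : ∀ t ∈ J, HasDerivAt x (P (x t) (y t)) t)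
    (hy : ∀ t ∈ J, HasDerivAt y (Q (x t) (y t)) t) :
    ∀ t₁ ∈ J, ∀ t₂ ∈ J, Hp (x t₁) (y t₁) = Hp (x t₂) (y t₂) := by
  obtain rfl : P = UpperBiCenterI.P a21 b03 a03 := funext₂ hP
  obtain rfl : Q = UpperBiCenterI.Q a21 b03 := funext₂ hQ
  obtain rfl : Hp = UpperBiCenterI.H a21 b03 a03 := funext₂ hH
  exact fun t₁ ht₁ t₂ ht₂ => UpperBiCenterI.H_eq_along_solution hJconn hx hy ht₁ ht₂

/-- Under bi-center condition I, the Hamiltonian H⁺ is a first integral of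
the upper system: it is constant along every solution defined on an open
interval J. -/
theorem stmt_2 (a21 b03 a03 : ℝ)
    (P Q Hp : ℝ → ℝ → ℝ)
    (hP : ∀ x y, P x y = 2*a21*x*y + a21*x^2*y - 3*b03*x*y^2 + a03*y^3)
    (hQ : ∀ x y, Q x y = x + (3/2)*x^2 - a21*y^2 + (1/2)*x^3 - a21*x*y^2 + b03*y^3)
    (hH : ∀ x y, Hp x y = -x^2/2 - x^3/2 - x^4/8 + (a21/2)*x^2*y^2
        - b03*x*y^3 + a21*x*y^2 + (a03/4)*y^4)
    (J : Set ℝ) (hJopen : IsOpen J) (hJconn : J.OrdConnected)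
    (x y : ℝ → ℝ)
    (hx : ∀ t ∈ J, HasDerivAt x (P (x t) (y t)) t)
    (hy : ∀ t ∈ J, HasDerivAt y (Q (x t) (y t)) t) :
    ∀ t₁ ∈ J, ∀ t₂ ∈ J, Hp (x t₁) (y t₁) = Hp (x t₂) (y t₂) :=
  stmt_2_general a21 b03 a03 P Q Hp hP hQ hH J hJconn x y hx hy
end

section
/- Let a21, a03, b21 be real numbers satisfying 9·(a03 + 2·a21²)² + 8·a21·b21²·(3·a03 + 2·a21²) = 0. Define P(x,y) = −a21·y + a21·x²·y + a03·y³, Q(x,y) = −x/2 + x³/2 − b21·y + b21·x²·y − a21·x·y² − (2/3)·a21·b21·y³, and I(x,y) = 3·(9·a03 + 2·a21²)·(x² + 2·b21·x·y − 2·a21·y²) − (3·a03 − 2·a21²)·(3·x⁴ + 6·b21·x³·y − 12·a21·x²·y² − 4·a21·b21·x·y³ − 6·a03·y⁴). Then for every (x,y) ∈ ℝ², P(x,y)·∂I/∂x (x,y) + Q(x,y)·∂I/∂y (x,y) = (∂P/∂x (x,y) + ∂Q/∂y (x,y))·I(x,y); that is, I is an inverse integrating factor of the system ẋ = P, ẏ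 = Q. -/
/-! Everything is polynomial, so the claim is a direct computation: the defect
`P·I_x + Q·I_y - (P_x + Q_y)·I` equals `2·x·y³` times the left-hand side of the
bi-center condition, hence vanishes. -/

namespace BiCenterIII

variable (a21 a03 b21 : ℝ)

def P (x y : ℝ) : ℝ := -a21*y + a21*x^2*y + a03*y^3

noncomputable def Q (x y : ℝ) : ℝ :=
  -x/2 + x^3/2 - b21*y + b21*x^2*y - a21*x*y^2 - (2/3)*a21*b21*y^3

def I (x y : ℝ) : ℝ :=
  3*(9*a03 + 2*a21^2)*(x^2 + 2*b21*x*y - 2*a21*y^2)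
    - (3*a03 - 2*a21^2)*(3*x^4 + 6*b21*x^3*y - 12*a21*x^2*y^2
        - 4*a21*b21*x*y^3 - 6*a03*y^4)

variable (x y : ℝ)

theorem deriv_P_x : deriv (fun x' => P a21 a03 x' y) x = 2*a21*x*y := by
  simp (disch := fun_prop) only [P, deriv_fun_add, deriv_const_mul_field',
    deriv_mul_const_field', deriv_fun_pow, deriv_id'', deriv_const]
  ring

theorem deriv_Q_y :
    deriv (fun y' => Q a21 b21 x y') y = -b21 + b21*x^2 - 2*a21*x*y - 2*a21*b21*y^2 := by
  simp (disch := fun_prop) only [Q, deriv_fun_sub, deriv_fun_add, deriv_const_mul_field',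
    deriv_const_mul_id, deriv_fun_pow, deriv_id'', deriv_const]
  ring

theorem deriv_I_x :
    deriv (fun x' => I a21 a03 b21 x' y) x =
      3*(9*a03 + 2*a21^2)*(2*x + 2*b21*y)
        - (3*a03 - 2*a21^2)*(12*x^3 + 18*b21*x^2*y - 24*a21*x*y^2 - 4*a21*b21*y^3) := by
  simp (disch := fun_prop) only [I, deriv_fun_sub, deriv_fun_add, deriv_const_mul_field',
    deriv_mul_const_field', deriv_const_mul_id, deriv_fun_pow, deriv_id'', deriv_const]
  ring

theorem deriv_I_y :
    deriv (fun y' => I a21 a03 b21 x y') y =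
      3*(9*a03 + 2*a21^2)*(2*b21*x - 4*a21*y)
        - (3*a03 - 2*a21^2)*(6*b21*x^3 - 24*a21*x^2*y - 12*a21*b21*x*y^2 - 24*a03*y^3) := by
  simp (disch := fun_prop) only [I, deriv_fun_sub, deriv_fun_add, deriv_const_mul_field',
    deriv_const_mul_id, deriv_fun_pow, deriv_id'', deriv_const]
  ring

theorem inverseIntegratingFactor_defect :
    P a21 a03 x y * deriv (fun x' => I a21 a03 b21 x' y) x
        + Q a21 b21 x y * deriv (fun y' => I a21 a03 b21 x y') y
        - (deriv (fun x' => P a21 a03 x' y) x + deriv (fun y' => Q a21 b21 x y') y)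
          * I a21 a03 b21 x y
      = 2*x*y^3 * (9*(a03 + 2*a21^2)^2 + 8*a21*b21^2*(3*a03 + 2*a21^2)) := by
  rw [deriv_I_x, deriv_I_y, deriv_P_x, deriv_Q_y, P, Q, I]
  ring

end BiCenterIII

/-- Under bi-center condition III, the polynomial I is an inverse integrating
factor of the smooth cubic system: P·I_x + Q·I_y = (P_x + Q_y)·I identically. -/
theorem stmt_4 (a21 a03 b21 : ℝ)
    (hcond : 9*(a03 + 2*a21^2)^2 + 8*a21*b21^2*(3*a03 + 2*a21^2) = 0)
    (P Q I : ℝ → ℝ → ℝ)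
    (hP : ∀ x y, P x y = -a21*y + a21*x^2*y + a03*y^3)
    (hQ : ∀ x y, Q x y = -x/2 + x^3/2 - b21*y + b21*x^2*y - a21*x*y^2
        - (2/3)*a21*b21*y^3)
    (hI : ∀ x y, I x y = 3*(9*a03 + 2*a21^2)*(x^2 + 2*b21*x*y - 2*a21*y^2)
        - (3*a03 - 2*a21^2)*(3*x^4 + 6*b21*x^3*y - 12*a21*x^2*y^2
            - 4*a21*b21*x*y^3 - 6*a03*y^4)) :
    ∀ x y : ℝ,
      P x y * deriv (fun x' : ℝ => I x' y) x
        + Q x y * deriv (fun y' : ℝ => I x y') y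
      = (deriv (fun x' : ℝ => P x' y) x + deriv (fun y' : ℝ => Q x y') y)
          * I x y := by
  obtain rfl : P = BiCenterIII.P a21 a03 := funext₂ hP
  obtain rfl : Q = BiCenterIII.Q a21 b21 := funext₂ hQ
  obtain rfl : I = BiCenterIII.I a21 a03 b21 := funext₂ hI
  intro x y
  linear_combination BiCenterIII.inverseIntegratingFactor_defect a21 a03 b21 x y
    + 2*x*y^3 * hcond
end

section
/- Let a21, a02, a12, b03, a03 be real numbers, and define P⁻(x,y) = 2·a21·x·y + a21·x²·y − (a02 + a12 + 6·b03)·y² − 3·b03·x·y² + a03·y³, Q(x,y) = x + (3/2)·x² − a21·y² + (1/2)·x³ − a21·x·y² + b03·y³, and H⁻(x,y) = −x²/2 − x³/2 + a21·x·y² − ((a02 + a12 + 6·b03)/3)·y³ − x⁴/8 + (a21/2)·x²·y² − b03·x·y³ + (a03/4)·y⁴. If J ⊆ ℝ is an open interval and x, y : ℝ → ℝ are differentiable on J with x′(t) = P⁻(x(t), y(t)) and y′(t) = Q(x(t), y(t)) for all t ∈ J, then the function t ↦ H⁻(x(t), y(t)) is constant on J. -/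
/-!
The lower system is Hamiltonian: `P⁻ = ∂H⁻/∂y` and `Q = -∂H⁻/∂x`. Along a solution the chain rule
gives `d/dt H⁻(x, y) = ∂ₓH⁻ · ∂ᵧH⁻ + ∂ᵧH⁻ · (-∂ₓH⁻) = 0`, and a function with vanishing
derivative on an open interval is constant there.
-/

open ContinuousLinearMap

theorem hasDerivAt_comp_eq_zero_of_hamiltonian {H : ℝ × ℝ → ℝ} {Hx Hy : ℝ} {x y : ℝ → ℝ}
    {t : ℝ} (hH : HasFDerivAt H (Hx • fst ℝ ℝ ℝ + Hy • snd ℝ ℝ ℝ) (x t, y t))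
    (hx : HasDerivAt x Hy t) (hy : HasDerivAt y (-Hx) t) :
    HasDerivAt (fun t => H (x t, y t)) 0 t := by
  refine (hH.comp_hasDerivAt t (hx.prodMk hy)).congr_deriv ?_
  simp only [add_apply, smul_apply, coe_fst', coe_snd', smul_eq_mul]
  ring

namespace BiCenterVI

variable (a21 a02 a12 b03 a03 : ℝ)

def lowerP (x y : ℝ) : ℝ :=
  2*a21*x*y + a21*x^2*y - (a02 + a12 + 6*b03)*y^2 - 3*b03*x*y^2 + a03*y^3

noncomputable def lowerQ (x y : ℝ) : ℝ :=
  x + (3/2)*x^2 - a21*y^2 + (1/2)*x^3 - a21*x*y^2 + b03*y^3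

noncomputable def hamiltonian (x y : ℝ) : ℝ :=
  -x^2/2 - x^3/2 + a21*x*y^2 - ((a02 + a12 + 6*b03)/3)*y^3 - x^4/8 + (a21/2)*x^2*y^2
    - b03*x*y^3 + (a03/4)*y^4

theorem hasFDerivAt_hamiltonian (p : ℝ × ℝ) :
    HasFDerivAt (fun p : ℝ × ℝ => hamiltonian a21 a02 a12 b03 a03 p.1 p.2)
      ((-lowerQ a21 b03 p.1 p.2) • fst ℝ ℝ ℝ + lowerP a21 a02 a12 b03 a03 p.1 p.2 • snd ℝ ℝ ℝ)
      p := by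
  have hu : HasFDerivAt (fun p : ℝ × ℝ => p.1) (fst ℝ ℝ ℝ) p := hasFDerivAt_fst
  have hv : HasFDerivAt (fun p : ℝ × ℝ => p.2) (snd ℝ ℝ ℝ) p := hasFDerivAt_snd
  have h := (((((((((hu.pow 2).mul_const (1/2)).neg.sub ((hu.pow 3).mul_const (1/2))).add
    ((hu.mul (hv.pow 2)).const_mul a21)).sub
    ((hv.pow 3).const_mul ((a02 + a12 + 6*b03)/3))).sub ((hu.pow 4).mul_const (1/8))).add
    (((hu.pow 2).mul (hv.pow 2)).const_mul (a21/2))).sub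
    ((hu.mul (hv.pow 3)).const_mul b03)).add ((hv.pow 4).const_mul (a03/4)))
  refine (h.congr_fderiv ?_).congr_of_eventuallyEq (.of_forall fun q => ?_)
  · refine ContinuousLinearMap.ext fun w => ?_
    simp only [lowerP, lowerQ, add_apply, sub_apply, neg_apply, smul_apply, coe_fst', coe_snd',
      smul_eq_mul, nsmul_eq_mul]
    ring
  · simp only [hamiltonian, Pi.add_apply, Pi.sub_apply, Pi.neg_apply, Pi.mul_apply]
    ring

end BiCenterVI

open BiCenterVI in
/-- Under bi-center condition VI, the Hamiltonian H⁻ is a first integral of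
the lower system: it is constant along every solution defined on an open
interval J. -/
theorem stmt_10 (a21 a02 a12 b03 a03 : ℝ)
    (Pm Q Hm : ℝ → ℝ → ℝ)
    (hP : ∀ x y, Pm x y = 2*a21*x*y + a21*x^2*y - (a02 + a12 + 6*b03)*y^2
        - 3*b03*x*y^2 + a03*y^3)
    (hQ : ∀ x y, Q x y = x + (3/2)*x^2 - a21*y^2 + (1/2)*x^3 - a21*x*y^2 + b03*y^3)
    (hHm : ∀ x y, Hm x y = -x^2/2 - x^3/2 + a21*x*y^2
        - ((a02 + a12 + 6*b03)/3)*y^3 - x^4/8 + (a21/2)*x^2*y^2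
        - b03*x*y^3 + (a03/4)*y^4)
    (J : Set ℝ) (hJopen : IsOpen J) (hJconn : J.OrdConnected)
    (x y : ℝ → ℝ)
    (hx : ∀ t ∈ J, HasDerivAt x (Pm (x t) (y t)) t)
    (hy : ∀ t ∈ J, HasDerivAt y (Q (x t) (y t)) t) :
    ∀ t₁ ∈ J, ∀ t₂ ∈ J, Hm (x t₁) (y t₁) = Hm (x t₂) (y t₂) := by
  obtain rfl : Pm = lowerP a21 a02 a12 b03 a03 := funext₂ hP
  obtain rfl : Q = lowerQ a21 b03 := funext₂ hQ
  obtain rfl : Hm = hamiltonian a21 a02 a12 b03 a03 := funext₂ hHm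
  have hconserved : ∀ t ∈ J,
      HasDerivAt (fun t => hamiltonian a21 a02 a12 b03 a03 (x t) (y t)) 0 t := fun t ht =>
    hasDerivAt_comp_eq_zero_of_hamiltonian (H := fun p => hamiltonian a21 a02 a12 b03 a03 p.1 p.2)
      (hasFDerivAt_hamiltonian a21 a02 a12 b03 a03 (x t, y t)) (hx t ht)
      (by simpa using hy t ht)
  intro t₁ ht₁ t₂ ht₂
  exact hJopen.is_const_of_deriv_eq_zero hJconn.isPreconnected
    (fun t ht => (hconserved t ht).differentiableAt.differentiableWithinAt)
    (fun t ht => (hconserved t ht).deriv) ht₁ ht₂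
end

section
/- Let b21 be a nonzero real number. Then there is no real number p02 such that both (7·b21² + 40·b21·p02 − 80·p02²)·(29·b21² − 40·b21·p02 + 80·p02²) = 0 and 551·b21² + 1544·b21·p02 − 3088·p02² = 0 hold; equivalently, the polynomials V_{6a}(p02) = (7·b21² + 40·b21·p02 − 80·p02²)·(29·b21² − 40·b21·p02 + 80·p02²) and V_{6b}(p02) = 551·b21² + 1544·b21·p02 − 3088·p02² have no common real root. -/
/-!
The second factor of V₆ₐ equals 5·(4·p02 - b21)² + 24·b21², so it is positive for b21 ≠ 0 and a
common root must annihilate 7·b21² + 40·b21·p02 - 80·p02². The p02-dependent parts of that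
factor and of V₆ᵦ are proportional, which leaves 5·V₆ᵦ - 193·(7·b21² + 40·b21·p02 - 80·p02²)
= 1404·b21², forcing b21 = 0.
-/

theorem v6a_factor_pos (b p : ℝ) (hb : b ≠ 0) : 0 < 29*b^2 - 40*b*p + 80*p^2 := by
  have hsq : 29*b^2 - 40*b*p + 80*p^2 = 5*(4*p - b)^2 + 24*b^2 := by ring
  rw [hsq]
  positivity

/-- For b21 ≠ 0 the polynomials V₆ₐ and V₆ᵦ (from case (ii-2) of the proof of
Theorem 2.2) have no common real root p02. -/
theorem stmt_13 (b21 : ℝ) (hb : b21 ≠ 0) :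
    ¬ ∃ p02 : ℝ,
      (7*b21^2 + 40*b21*p02 - 80*p02^2)*(29*b21^2 - 40*b21*p02 + 80*p02^2) = 0 ∧
      551*b21^2 + 1544*b21*p02 - 3088*p02^2 = 0 := by
  rintro ⟨p02, hV6a, hV6b⟩
  have hfirst : 7*b21^2 + 40*b21*p02 - 80*p02^2 = 0 :=
    (mul_eq_zero.mp hV6a).resolve_right (v6a_factor_pos b21 p02 hb).ne'
  have hb_sq : 1404 * b21^2 = 0 := by linear_combination 5*hV6b - 193*hfirst
  exact hb (by simpa using hb_sq)
end
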